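/- The Nijenhuis tensor of the invariant almost complex structure J on 𝔪 = 𝔤/𝔥 is non-degenerate: the bilinear map N : W × W → 𝔪 defined by N(u, v) = π([J̃u, J̃v] − [u, v]) − J(π([J̃u, v] + [u, J̃v])) has image whose real linear span is all of 𝔪. (Since dim 𝔪 = 6 and N is J-antilinear in each argument, this is equivalent to the Nijenhuis tensor, viewed as a complex-antilinear map Λ²_ℂ 𝔪 → 𝔪, being an isomorphism.) -/

import Mathlib

noncomputable section

/-- The underlying space of the 9-dimensional Lie algebra `𝔤`; coordinates are taken
with respect to the ordered basis `z, b, x₁, x₂, x₃, x₄, h, e, f`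
(so index 0 = z, 1 = b, 2 = x₁, 3 = x₂, 4 = x₃, 5 = x₄, 6 = h, 7 = e, 8 = f). -/
def G : Type := Fin 9 → ℝ

instance : AddCommGroup G := inferInstanceAs (AddCommGroup (Fin 9 → ℝ))
instance : Module ℝ G := inferInstanceAs (Module ℝ (Fin 9 → ℝ))

@[simp] lemma G.add_apply (u v : G) (k : Fin 9) : (u + v) k = u k + v k := rfl
@[simp] lemma G.smul_apply (c : ℝ) (u : G) (k : Fin 9) : (c • u) k = c * u k := rfl
@[simp] lemma G.zero_apply (k : Fin 9) : (0 : G) k = 0 := rfl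

/-- The Lie bracket of `𝔤` determined by `[b,xᵢ] = xᵢ`, `[b,z] = 2z`, `[h,x₁] = −3x₁`,
`[h,x₂] = −x₂`, `[h,x₃] = x₃`, `[h,x₄] = 3x₄`, `[f,x₂] = −3x₁`, `[f,x₃] = −2x₂`,
`[f,x₄] = −x₃`, `[e,x₁] = x₂`, `[e,x₂] = 2x₃`, `[e,x₃] = 3x₄`, `[x₁,x₄] = z`,
`[x₂,x₃] = −3z`, `[h,f] = −2f`, `[h,e] = 2e`, `[f,e] = h`, all other brackets of
basis elements being zero. -/
def gb (u v : G) : G := fun k =>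
  match k with
  | 0 => -2*(u 0*v 1 - u 1*v 0) + (u 2*v 5 - u 5*v 2) - 3*(u 3*v 4 - u 4*v 3)
  | 1 => 0
  | 2 => (u 1*v 2 - u 2*v 1) + 3*(u 2*v 6 - u 6*v 2) + 3*(u 3*v 8 - u 8*v 3)
  | 3 => (u 1*v 3 - u 3*v 1) - (u 2*v 7 - u 7*v 2) + (u 3*v 6 - u 6*v 3) + 2*(u 4*v 8 - u 8*v 4)
  | 4 => (u 1*v 4 - u 4*v 1) - 2*(u 3*v 7 - u 7*v 3) - (u 4*v 6 - u 6*v 4) + (u 5*v 8 - u 8*v 5)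
  | 5 => (u 1*v 5 - u 5*v 1) - 3*(u 4*v 7 - u 7*v 4) - 3*(u 5*v 6 - u 6*v 5)
  | 6 => -(u 7*v 8 - u 8*v 7)
  | 7 => 2*(u 6*v 7 - u 7*v 6)
  | 8 => -2*(u 6*v 8 - u 8*v 6)

instance : LieRing G where
  bracket := gb
  add_lie := by intro x y z; funext k; fin_cases k <;> simp only [gb, G.add_apply] <;> ring
  lie_add := by intro x y z; funext k; fin_cases k <;> simp only [gb, G.add_apply] <;> ring
  lie_self := by intro x; funext k; fin_cases k <;> simp only [gb, G.zero_apply] <;> ring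
  leibniz_lie := by intro x y z; funext k; fin_cases k <;> simp only [gb, G.add_apply] <;> ring

lemma G.lie_def (u v : G) : ⁅u, v⁆ = gb u v := rfl

instance : LieAlgebra ℝ G where
  lie_smul := by
    intro c x y; funext k
    rw [G.lie_def, G.lie_def]
    fin_cases k <;> simp only [gb, G.smul_apply] <;> ring

/-- basis vector `z` -/ def zv : G := Pi.single 0 1
/-- basis vector `b` -/ def bv : G := Pi.single 1 1
/-- basis vector `x₁` -/ def x1v : G := Pi.single 2 1
/-- basis vector `x₂` -/ def x2v : G := Pi.single 3 1
/-- basis vector `x₃` -/ def x3v : G := Pi.single 4 1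
/-- basis vector `x₄` -/ def x4v : G := Pi.single 5 1
/-- basis vector `h` -/ def hv : G := Pi.single 6 1
/-- basis vector `e` -/ def ev : G := Pi.single 7 1
/-- basis vector `f` -/ def fv : G := Pi.single 8 1


/-- The subalgebra `𝔥 = span{x₁, h − b, f − z}` (as a subspace of `𝔤`). -/
def Hsub : Submodule ℝ G := Submodule.span ℝ {x1v, hv - bv, fv - zv}

/-- The quotient map `π : 𝔤 → 𝔪 = 𝔤/𝔥`. -/
def pr : G →ₗ[ℝ] G ⧸ Hsub := Hsub.mkQ

/-- The defining values of the invariant almost complex structure `J` on `𝔪 = 𝔤/𝔥`: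
`J z̄ = x̄₂`, `J b̄ = −x̄₃`, `J ē = x̄₄`, `J x̄₂ = −z̄`, `J x̄₃ = b̄`, `J x̄₄ = −ē`. -/
def IsJ (J : Module.End ℝ (G ⧸ Hsub)) : Prop :=
  J (pr zv) = pr x2v ∧ J (pr bv) = -pr x3v ∧ J (pr ev) = pr x4v ∧
  J (pr x2v) = -pr zv ∧ J (pr x3v) = pr bv ∧ J (pr x4v) = -pr ev

/-- The complement `W = span{z, b, e, x₂, x₃, x₄} ⊂ 𝔤`, on which `π` restricts to a linear
isomorphism onto `𝔪 = 𝔤/𝔥`. -/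
def Wsub : Submodule ℝ G := Submodule.span ℝ {zv, bv, ev, x2v, x3v, x4v}

/-!
`π` is injective on `W`, since `W` has vanishing `x₁`-, `h`- and `f`-coordinates while an element
of `𝔥` is determined by exactly these coordinates; hence `J̃` is computed from `J` on the basis
of `W`. On the pairs `(z,b)`, `(z,e)`, `(z,x₃)`, `(z,x₄)`, `(b,e)`, `(b,x₄)` the tensor `N` takes
the values `4z̄`, `2b̄`, `4x̄₂`, `2x̄₃`, `4ē`, `−4x̄₄`, and these span `𝔪` because `𝔤 = 𝔥 + W`.
-/

lemma G.sub_apply (u v : G) (k : Fin 9) : (u - v) k = u k - v k := rfl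

lemma zv_mem_Wsub : zv ∈ Wsub := Submodule.subset_span (by simp)
lemma bv_mem_Wsub : bv ∈ Wsub := Submodule.subset_span (by simp)
lemma ev_mem_Wsub : ev ∈ Wsub := Submodule.subset_span (by simp)
lemma x2v_mem_Wsub : x2v ∈ Wsub := Submodule.subset_span (by simp)
lemma x3v_mem_Wsub : x3v ∈ Wsub := Submodule.subset_span (by simp)
lemma x4v_mem_Wsub : x4v ∈ Wsub := Submodule.subset_span (by simp)

lemma coords_eq_zero_of_mem_Wsub {w : G} (hw : w ∈ Wsub) : w 2 = 0 ∧ w 6 = 0 ∧ w 8 = 0 := by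
  induction hw using Submodule.span_induction with
  | mem x hx =>
    simp only [Set.mem_insert_iff, Set.mem_singleton_iff] at hx
    rcases hx with rfl | rfl | rfl | rfl | rfl | rfl <;>
      simp [zv, bv, ev, x2v, x3v, x4v]
  | zero => simp
  | add x y _ _ hx hy => simp [hx, hy]
  | smul c x _ hx => simp [hx]

lemma eq_zero_of_mem_Hsub {w : G} (hw : w ∈ Hsub) (h2 : w 2 = 0) (h6 : w 6 = 0) (h8 : w 8 = 0) :
    w = 0 := by
  obtain ⟨a, y, hy, rfl⟩ := Submodule.mem_span_insert.1 hw
  obtain ⟨b, y', hy', rfl⟩ := Submodule.mem_span_insert.1 hy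
  obtain ⟨c, rfl⟩ := Submodule.mem_span_singleton.1 hy'
  simp only [G.add_apply, G.smul_apply, G.sub_apply] at h2 h6 h8
  obtain ⟨rfl, rfl, rfl⟩ : a = 0 ∧ b = 0 ∧ c = 0 := by
    simpa [x1v, hv, bv, fv, zv] using And.intro h2 (And.intro h6 h8)
  simp

lemma disjoint_Wsub_Hsub : Disjoint Wsub Hsub := by
  rw [Submodule.disjoint_def]
  intro w hW hH
  obtain ⟨h2, h6, h8⟩ := coords_eq_zero_of_mem_Wsub hW
  exact eq_zero_of_mem_Hsub hH h2 h6 h8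

lemma pr_injOn_Wsub : Set.InjOn pr Wsub := by
  intro w hw w' hw' h
  rw [← sub_eq_zero]
  exact Submodule.disjoint_def.1 disjoint_Wsub_Hsub _ (sub_mem hw hw')
    ((Submodule.Quotient.eq _).1 h)

lemma Hsub_sup_Wsub : Hsub ⊔ Wsub = ⊤ := by
  obtain ⟨B, hB⟩ : ∃ B : Module.Basis (Fin 9) ℝ G, ∀ k, B k = Pi.single k 1 :=
    ⟨Pi.basisFun ℝ (Fin 9), Pi.basisFun_apply ℝ (Fin 9)⟩
  rw [eq_top_iff, ← B.span_eq, Submodule.span_le]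
  rintro _ ⟨k, rfl⟩
  rw [SetLike.mem_coe, hB]
  have hH : ∀ x ∈ ({x1v, hv - bv, fv - zv} : Set G), x ∈ Hsub ⊔ Wsub := fun x hx =>
    Submodule.mem_sup_left (Submodule.subset_span hx)
  have hW {x : G} (hx : x ∈ Wsub) : x ∈ Hsub ⊔ Wsub := Submodule.mem_sup_right hx
  fin_cases k
  · exact hW zv_mem_Wsub
  · exact hW bv_mem_Wsub
  · exact hH x1v (by simp)
  · exact hW x2v_mem_Wsub
  · exact hW x3v_mem_Wsub
  · exact hW x4v_mem_Wsub
  · exact (sub_add_cancel hv bv ▸ add_mem (hH _ (by simp)) (hW bv_mem_Wsub) : hv ∈ Hsub ⊔ Wsub)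
  · exact hW ev_mem_Wsub
  · exact (sub_add_cancel fv zv ▸ add_mem (hH _ (by simp)) (hW zv_mem_Wsub) : fv ∈ Hsub ⊔ Wsub)

lemma span_image_pr_eq_top : Submodule.span ℝ (pr '' {zv, bv, ev, x2v, x3v, x4v}) = ⊤ := by
  rw [← Submodule.map_span]
  exact (Submodule.map_mkQ_eq_top _ _).2 Hsub_sup_Wsub

lemma lie_zv_bv : ⁅zv, bv⁆ = (-2 : ℝ) • zv := by
  funext k; rw [G.lie_def, G.smul_apply]; fin_cases k <;> simp [gb, zv, bv]
lemma lie_zv_ev : ⁅zv, ev⁆ = 0 := by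
  funext k; rw [G.lie_def, G.zero_apply]; fin_cases k <;> simp [gb, zv, ev]
lemma lie_zv_x3v : ⁅zv, x3v⁆ = 0 := by
  funext k; rw [G.lie_def, G.zero_apply]; fin_cases k <;> simp [gb, zv, x3v]
lemma lie_zv_x4v : ⁅zv, x4v⁆ = 0 := by
  funext k; rw [G.lie_def, G.zero_apply]; fin_cases k <;> simp [gb, zv, x4v]
lemma lie_bv_ev : ⁅bv, ev⁆ = 0 := by
  funext k; rw [G.lie_def, G.zero_apply]; fin_cases k <;> simp [gb, bv, ev]
lemma lie_bv_x4v : ⁅bv, x4v⁆ = x4v := by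
  funext k; rw [G.lie_def]; fin_cases k <;> simp [gb, bv, x4v]
lemma lie_x2v_bv : ⁅x2v, bv⁆ = (-1 : ℝ) • x2v := by
  funext k; rw [G.lie_def, G.smul_apply]; fin_cases k <;> simp [gb, x2v, bv]
lemma lie_x2v_ev : ⁅x2v, ev⁆ = (-2 : ℝ) • x3v := by
  funext k; rw [G.lie_def, G.smul_apply]; fin_cases k <;> simp [gb, x2v, ev, x3v]
lemma lie_x2v_x3v : ⁅x2v, x3v⁆ = (-3 : ℝ) • zv := by
  funext k; rw [G.lie_def, G.smul_apply]; fin_cases k <;> simp [gb, x2v, x3v, zv]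
lemma lie_x2v_x4v : ⁅x2v, x4v⁆ = 0 := by
  funext k; rw [G.lie_def, G.zero_apply]; fin_cases k <;> simp [gb, x2v, x4v]
lemma lie_x3v_ev : ⁅x3v, ev⁆ = (-3 : ℝ) • x4v := by
  funext k; rw [G.lie_def, G.smul_apply]; fin_cases k <;> simp [gb, x3v, ev, x4v]
lemma lie_x3v_x4v : ⁅x3v, x4v⁆ = 0 := by
  funext k; rw [G.lie_def, G.zero_apply]; fin_cases k <;> simp [gb, x3v, x4v]

def nijenhuis (J : Module.End ℝ (G ⧸ Hsub)) (Jt : Wsub →ₗ[ℝ] Wsub) (u v : Wsub) : G ⧸ Hsub :=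
  pr (⁅(Jt u : G), (Jt v : G)⁆ - ⁅(u : G), (v : G)⁆) -
    J (pr (⁅(Jt u : G), (v : G)⁆ + ⁅(u : G), (Jt v : G)⁆))

def IsLift (J : Module.End ℝ (G ⧸ Hsub)) (Jt : Wsub →ₗ[ℝ] Wsub) : Prop :=
  ∀ w : Wsub, pr (Jt w : G) = J (pr (w : G))

section Nijenhuis

variable {J : Module.End ℝ (G ⧸ Hsub)} {Jt : Wsub →ₗ[ℝ] Wsub}

lemma coe_Jt_eq (hJt : IsLift J Jt) {w : Wsub} {t : G} (ht : t ∈ Wsub) (h : J (pr w) = pr t) :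
    (Jt w : G) = t :=
  pr_injOn_Wsub (Jt w).2 ht ((hJt w).trans h)

lemma coe_Jt_zv (hJ : IsJ J) (hJt : IsLift J Jt) : (Jt ⟨zv, zv_mem_Wsub⟩ : G) = x2v :=
  coe_Jt_eq hJt x2v_mem_Wsub hJ.1
lemma coe_Jt_bv (hJ : IsJ J) (hJt : IsLift J Jt) : (Jt ⟨bv, bv_mem_Wsub⟩ : G) = -x3v :=
  coe_Jt_eq hJt (neg_mem x3v_mem_Wsub) (hJ.2.1.trans (map_neg pr x3v).symm)
lemma coe_Jt_ev (hJ : IsJ J) (hJt : IsLift J Jt) : (Jt ⟨ev, ev_mem_Wsub⟩ : G) = x4v :=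
  coe_Jt_eq hJt x4v_mem_Wsub hJ.2.2.1
lemma coe_Jt_x3v (hJ : IsJ J) (hJt : IsLift J Jt) : (Jt ⟨x3v, x3v_mem_Wsub⟩ : G) = bv :=
  coe_Jt_eq hJt bv_mem_Wsub hJ.2.2.2.2.1
lemma coe_Jt_x4v (hJ : IsJ J) (hJt : IsLift J Jt) : (Jt ⟨x4v, x4v_mem_Wsub⟩ : G) = -ev :=
  coe_Jt_eq hJt (neg_mem ev_mem_Wsub) (hJ.2.2.2.2.2.trans (map_neg pr ev).symm)

lemma nijenhuis_zv_bv (hJ : IsJ J) (hJt : IsLift J Jt) :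
    nijenhuis J Jt ⟨zv, zv_mem_Wsub⟩ ⟨bv, bv_mem_Wsub⟩ = (4 : ℝ) • pr zv := by
  rw [nijenhuis, coe_Jt_zv hJ hJt, coe_Jt_bv hJ hJt]
  simp only [lie_neg, lie_x2v_x3v, lie_zv_bv, lie_x2v_bv, lie_zv_x3v,
    map_add, map_sub, map_neg, map_smul, map_zero, hJ.2.2.2.1]
  module

lemma nijenhuis_zv_ev (hJ : IsJ J) (hJt : IsLift J Jt) :
    nijenhuis J Jt ⟨zv, zv_mem_Wsub⟩ ⟨ev, ev_mem_Wsub⟩ = (2 : ℝ) • pr bv := by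
  rw [nijenhuis, coe_Jt_zv hJ hJt, coe_Jt_ev hJ hJt]
  simp only [lie_x2v_x4v, lie_zv_ev, lie_x2v_ev, lie_zv_x4v,
    map_add, map_sub, map_smul, map_zero, hJ.2.2.2.2.1]
  module

lemma nijenhuis_zv_x3v (hJ : IsJ J) (hJt : IsLift J Jt) :
    nijenhuis J Jt ⟨zv, zv_mem_Wsub⟩ ⟨x3v, x3v_mem_Wsub⟩ = (4 : ℝ) • pr x2v := by
  rw [nijenhuis, coe_Jt_zv hJ hJt, coe_Jt_x3v hJ hJt]
  simp only [lie_x2v_bv, lie_zv_x3v, lie_x2v_x3v, lie_zv_bv,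
    map_add, map_sub, map_smul, map_zero, hJ.1]
  module

lemma nijenhuis_zv_x4v (hJ : IsJ J) (hJt : IsLift J Jt) :
    nijenhuis J Jt ⟨zv, zv_mem_Wsub⟩ ⟨x4v, x4v_mem_Wsub⟩ = (2 : ℝ) • pr x3v := by
  rw [nijenhuis, coe_Jt_zv hJ hJt, coe_Jt_x4v hJ hJt]
  simp only [lie_neg, lie_x2v_ev, lie_zv_x4v, lie_x2v_x4v, lie_zv_ev,
    map_add, map_sub, map_neg, map_smul, map_zero]
  module

lemma nijenhuis_bv_ev (hJ : IsJ J) (hJt : IsLift J Jt) :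
    nijenhuis J Jt ⟨bv, bv_mem_Wsub⟩ ⟨ev, ev_mem_Wsub⟩ = (4 : ℝ) • pr ev := by
  rw [nijenhuis, coe_Jt_bv hJ hJt, coe_Jt_ev hJ hJt]
  simp only [neg_lie, lie_x3v_x4v, lie_bv_ev, lie_x3v_ev, lie_bv_x4v,
    map_add, map_sub, map_neg, map_smul, map_zero, hJ.2.2.2.2.2]
  module

lemma nijenhuis_bv_x4v (hJ : IsJ J) (hJt : IsLift J Jt) :
    nijenhuis J Jt ⟨bv, bv_mem_Wsub⟩ ⟨x4v, x4v_mem_Wsub⟩ = (-4 : ℝ) • pr x4v := by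
  rw [nijenhuis, coe_Jt_bv hJ hJt, coe_Jt_x4v hJ hJt]
  simp only [lie_neg, neg_lie, lie_x3v_ev, lie_bv_x4v, lie_x3v_x4v, lie_bv_ev,
    map_add, map_sub, map_neg, map_smul, map_zero]
  module

end Nijenhuis

/-- The Nijenhuis tensor of the invariant almost complex structure `J` on
`𝔪 = 𝔤/𝔥` is non-degenerate: with `J̃ = (π|_W)⁻¹ ∘ J ∘ (π|_W) : W → W`, the bilinear map
`N(u,v) = π([J̃u, J̃v] − [u,v]) − J(π([J̃u, v] + [u, J̃v]))` on `W × W` has image whose real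
linear span is all of `𝔪`. -/
theorem stmt9 (J : Module.End ℝ (G ⧸ Hsub)) (hJ : IsJ J)
    (Jt : Wsub →ₗ[ℝ] Wsub) (hJt : ∀ w : Wsub, pr (Jt w : G) = J (pr (w : G))) :
    Submodule.span ℝ {n : G ⧸ Hsub | ∃ u v : Wsub,
      n = pr (⁅(Jt u : G), (Jt v : G)⁆ - ⁅(u : G), (v : G)⁆) -
          J (pr (⁅(Jt u : G), (v : G)⁆ + ⁅(u : G), (Jt v : G)⁆))} = ⊤ := by
  change Submodule.span ℝ {n | ∃ u v : Wsub, n = nijenhuis J Jt u v} = ⊤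
  have mem_span {c : ℝ} (hc : c ≠ 0) {x : G ⧸ Hsub} {u v : Wsub}
      (h : nijenhuis J Jt u v = c • x) :
      x ∈ Submodule.span ℝ {n | ∃ u v : Wsub, n = nijenhuis J Jt u v} :=
    (Submodule.smul_mem_iff _ hc).1 (Submodule.subset_span ⟨u, v, h.symm⟩)
  rw [eq_top_iff, ← span_image_pr_eq_top, Submodule.span_le]
  rintro _ ⟨w, hw, rfl⟩
  simp only [Set.mem_insert_iff, Set.mem_singleton_iff] at hw
  rcases hw with rfl | rfl | rfl | rfl | rfl | rfl
  · exact mem_span four_ne_zero (nijenhuis_zv_bv hJ hJt)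
  · exact mem_span two_ne_zero (nijenhuis_zv_ev hJ hJt)
  · exact mem_span four_ne_zero (nijenhuis_bv_ev hJ hJt)
  · exact mem_span four_ne_zero (nijenhuis_zv_x3v hJ hJt)
  · exact mem_span two_ne_zero (nijenhuis_zv_x4v hJ hJt)
  · exact mem_span (by norm_num) (nijenhuis_bv_x4v hJ hJt)
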